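/- arXiv:1106.2033 — 4 statements merged into one kernel-verified Lean document; each statement's English description precedes it below -/
import Mathlib

section
/- Let U ⊆ ℝ^m be open, k ∈ ℕ, c ≥ 1 and ρ > 0, and let G : U → ℝ^{m×m} be a smooth map whose values are symmetric matrices satisfying ⟨G(x)ξ, ξ⟩ ≥ (ρ²/c)|ξ|² for all x ∈ U and ξ ∈ ℝ^m, and whose partial derivatives satisfy ‖∂^α G(x)‖ ≤ cρ² for all x ∈ U and all multi-indices α with |α| ≤ k. Then G(x) is invertible for every x ∈ U, the map x ↦ G(x)⁻¹ is smooth on U, and there is a constant C = C(m, k, c), independent of ρ, U and G, such that ‖∂^α (G⁻¹)(x)‖ ≤ C·ρ^{−2} for all x ∈ U and |α| ≤ k. -/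
set_option maxSynthPendingDepth 3
set_option synthInstance.maxHeartbeats 1000000
set_option maxHeartbeats 2000000

open scoped RealInnerProductSpace

/-- The iterated partial derivative `∂^α f` on a set `U ⊆ ℝ^m`, where the multi-index `α`
is encoded as the list of coordinate directions in which one differentiates. -/
noncomputable def pderivListOn {m : ℕ} {F : Type*} [NormedAddCommGroup F] [NormedSpace ℝ F]
    (U : Set (Fin m → ℝ)) : List (Fin m) → ((Fin m → ℝ) → F) → (Fin m → ℝ) → F
  | [], f => f
  | i :: L, f => fun x => fderivWithin ℝ (pderivListOn U L f) U x (Pi.single i 1)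

lemma pderiv_eq_iter {m : ℕ} {F : Type*} [NormedAddCommGroup F] [NormedSpace ℝ F]
    {U : Set (Fin m → ℝ)} (hU : IsOpen U) {f : (Fin m → ℝ) → F}
    (hf : ContDiffOn ℝ (⊤ : ℕ∞) f U) :
    ∀ (n : ℕ) (r : Fin n → Fin m), ∀ x ∈ U,
      pderivListOn U (List.ofFn r) f x
        = iteratedFDerivWithin ℝ n f U x (fun j => Pi.single (r j) 1) := by
  intro n
  induction n with
  | zero =>
    intro r x hx
    simp [pderivListOn, iteratedFDerivWithin_zero_apply]
  | succ n IH =>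
    intro r x hx
    rw [List.ofFn_succ]
    show fderivWithin ℝ (pderivListOn U (List.ofFn fun i => r i.succ) f) U x (Pi.single (r 0) 1) = _
    have hdiff : DifferentiableWithinAt ℝ (iteratedFDerivWithin ℝ n f U) U x :=
      hf.differentiableOn_iteratedFDerivWithin (by exact_mod_cast lt_top_iff_ne_top.2 (by simp))
        hU.uniqueDiffOn x hx
    rw [fderivWithin_congr (fun y hy => IH _ y hy) (IH _ x hx)]
    rw [fderivWithin_continuousMultilinear_apply_const_apply
      (hU.uniqueDiffOn x hx) hdiff _ _]
    rw [iteratedFDerivWithin_succ_apply_left]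
    rfl

lemma pderiv_le_iter {m : ℕ} {F : Type*} [NormedAddCommGroup F] [NormedSpace ℝ F]
    {U : Set (Fin m → ℝ)} (hU : IsOpen U) {f : (Fin m → ℝ) → F}
    (hf : ContDiffOn ℝ (⊤ : ℕ∞) f U) (L : List (Fin m)) {x} (hx : x ∈ U) :
    ‖pderivListOn U L f x‖ ≤ ‖iteratedFDerivWithin ℝ L.length f U x‖ := by
  have h := pderiv_eq_iter hU hf L.length L.get x hx
  rw [List.ofFn_get] at h
  rw [h]
  calc ‖iteratedFDerivWithin ℝ L.length f U x (fun j => Pi.single (L.get j) 1)‖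
      ≤ ‖iteratedFDerivWithin ℝ L.length f U x‖ * ∏ j, ‖(Pi.single (L.get j) 1 : Fin m → ℝ)‖ :=
        (iteratedFDerivWithin ℝ L.length f U x).le_opNorm _
    _ = ‖iteratedFDerivWithin ℝ L.length f U x‖ := by
        have : ∀ j : Fin L.length, ‖(Pi.single (L.get j) 1 : Fin m → ℝ)‖ = 1 := fun j => by
          rw [Pi.norm_single]; exact norm_one
        simp only [this, Finset.prod_const_one, mul_one]

lemma iter_le_pderiv {m : ℕ} {F : Type*} [NormedAddCommGroup F] [NormedSpace ℝ F]
    {U : Set (Fin m → ℝ)} (hU : IsOpen U) {f : (Fin m → ℝ) → F}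
    (hf : ContDiffOn ℝ (⊤ : ℕ∞) f U) (n : ℕ) {x} (hx : x ∈ U) {M : ℝ} (hM : 0 ≤ M)
    (hb : ∀ r : Fin n → Fin m, ‖pderivListOn U (List.ofFn r) f x‖ ≤ M) :
    ‖iteratedFDerivWithin ℝ n f U x‖ ≤ (m : ℝ) ^ n * M := by
  refine ContinuousMultilinearMap.opNorm_le_bound (mul_nonneg (by positivity) hM) fun v => ?_
  have hv : ∀ j : Fin n, v j = ∑ i : Fin m, v j i • (Pi.single i 1 : Fin m → ℝ) := by
    intro j
    rw [← Finset.univ_sum_single (v j)]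
    refine Finset.sum_congr rfl fun i _ => ?_
    simp [← Pi.single_smul]
  have hexp : (iteratedFDerivWithin ℝ n f U x) v
      = ∑ r : Fin n → Fin m, (∏ j, v j (r j)) •
          (iteratedFDerivWithin ℝ n f U x) (fun j => (Pi.single (r j) 1 : Fin m → ℝ)) := by
    calc (iteratedFDerivWithin ℝ n f U x) v
        = (iteratedFDerivWithin ℝ n f U x) (fun j => ∑ i : Fin m, v j i • (Pi.single i 1 : Fin m → ℝ)) := by
          congr 1; funext j; exact hv j
      _ = ∑ r : Fin n → Fin m, (iteratedFDerivWithin ℝ n f U x)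
            (fun j => v j (r j) • (Pi.single (r j) 1 : Fin m → ℝ)) := by
          exact (iteratedFDerivWithin ℝ n f U x).toMultilinearMap.map_sum
            (fun j i => v j i • (Pi.single i 1 : Fin m → ℝ))
      _ = _ := by
          refine Finset.sum_congr rfl fun r _ => ?_
          exact (iteratedFDerivWithin ℝ n f U x).toMultilinearMap.map_smul_univ
            (fun j => v j (r j)) (fun j => (Pi.single (r j) 1 : Fin m → ℝ))
  rw [hexp]
  calc ‖∑ r : Fin n → Fin m, (∏ j, v j (r j)) •
          (iteratedFDerivWithin ℝ n f U x) (fun j => (Pi.single (r j) 1 : Fin m → ℝ))‖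
      ≤ ∑ r : Fin n → Fin m, ‖(∏ j, v j (r j)) •
          (iteratedFDerivWithin ℝ n f U x) (fun j => (Pi.single (r j) 1 : Fin m → ℝ))‖ := norm_sum_le _ _
    _ ≤ ∑ r : Fin n → Fin m, M * ∏ j, ‖v j‖ := by
        refine Finset.sum_le_sum fun r _ => ?_
        rw [norm_smul]
        have h1 : ‖(iteratedFDerivWithin ℝ n f U x) (fun j => (Pi.single (r j) 1 : Fin m → ℝ))‖ ≤ M := by
          rw [← pderiv_eq_iter hU hf n r x hx]; exact hb r
        have h2 : ‖∏ j, v j (r j)‖ ≤ ∏ j, ‖v j‖ := by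
          rw [norm_prod]
          exact Finset.prod_le_prod (fun j _ => norm_nonneg _)
            (fun j _ => norm_le_pi_norm (v j) (r j))
        calc ‖∏ j, v j (r j)‖ * ‖(iteratedFDerivWithin ℝ n f U x) fun j => Pi.single (r j) 1‖
            ≤ (∏ j, ‖v j‖) * M := by
              apply mul_le_mul h2 h1 (norm_nonneg _)
              exact Finset.prod_nonneg fun j _ => norm_nonneg _
          _ = M * ∏ j, ‖v j‖ := mul_comm _ _
    _ = (m : ℝ) ^ n * M * ∏ j, ‖v j‖ := by
        rw [Finset.sum_const, Finset.card_univ, Fintype.card_fun]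
        simp only [Fintype.card_fin, nsmul_eq_mul, Nat.cast_pow]
        ring


lemma coercive_isUnit {m : ℕ} {ρ c : ℝ} (hρ : 0 < ρ) (hc : 0 < c)
    (T : EuclideanSpace ℝ (Fin m) →L[ℝ] EuclideanSpace ℝ (Fin m))
    (hT : ∀ ξ : EuclideanSpace ℝ (Fin m), ρ ^ 2 / c * ‖ξ‖ ^ 2 ≤ ⟪T ξ, ξ⟫) :
    IsUnit T ∧ ‖Ring.inverse T‖ ≤ c / ρ ^ 2 ∧
      ∀ y, T (Ring.inverse T y) = y := by
  have key : ∀ ξ : EuclideanSpace ℝ (Fin m), ‖ξ‖ ≤ c / ρ ^ 2 * ‖T ξ‖ := by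
    intro ξ
    rcases eq_or_ne ξ 0 with h | h
    · simp [h]
    · have h1 : ρ ^ 2 / c * ‖ξ‖ ^ 2 ≤ ‖T ξ‖ * ‖ξ‖ :=
        (hT ξ).trans ((real_inner_le_norm _ _).trans (le_of_eq rfl))
      have hξ : 0 < ‖ξ‖ := norm_pos_iff.2 h
      have hρ2 : (0:ℝ) < ρ ^ 2 := by positivity
      rw [div_mul_eq_mul_div, le_div_iff₀ hρ2]
      have h3 : ρ ^ 2 * ‖ξ‖ ^ 2 ≤ c * (‖T ξ‖ * ‖ξ‖) := by
        have h2 := mul_le_mul_of_nonneg_left h1 hc.le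
        calc ρ ^ 2 * ‖ξ‖ ^ 2 = c * (ρ ^ 2 / c * ‖ξ‖ ^ 2) := by field_simp
          _ ≤ _ := h2
      rw [← mul_le_mul_iff_of_pos_right hξ]
      nlinarith [h3]
  have hinj : Function.Injective T := by
    intro a b hab
    have h0 : T (a - b) = 0 := by rw [map_sub, hab, sub_self]
    have := key (a - b)
    rw [h0, norm_zero, mul_zero] at this
    have : ‖a - b‖ = 0 := le_antisymm this (norm_nonneg _)
    rwa [norm_eq_zero, sub_eq_zero] at this
  have hsurj : Function.Surjective T :=
    (LinearMap.injective_iff_surjective (f := (T : EuclideanSpace ℝ (Fin m) →ₗ[ℝ]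
      EuclideanSpace ℝ (Fin m)))).1 hinj
  let e : EuclideanSpace ℝ (Fin m) ≃ₗ[ℝ] EuclideanSpace ℝ (Fin m) :=
    LinearEquiv.ofBijective (T : EuclideanSpace ℝ (Fin m) →ₗ[ℝ] EuclideanSpace ℝ (Fin m))
      ⟨hinj, hsurj⟩
  let S : EuclideanSpace ℝ (Fin m) →L[ℝ] EuclideanSpace ℝ (Fin m) :=
    LinearMap.toContinuousLinearMap e.symm.toLinearMap
  have hTS : ∀ y, T (S y) = y := fun y => e.apply_symm_apply y
  have hST : ∀ y, S (T y) = y := fun y => e.symm_apply_apply y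
  have hvi : T * S = 1 := ContinuousLinearMap.ext fun y => by
    simpa [ContinuousLinearMap.mul_apply] using hTS y
  have hiv : S * T = 1 := ContinuousLinearMap.ext fun y => by
    simpa [ContinuousLinearMap.mul_apply] using hST y
  let u : (EuclideanSpace ℝ (Fin m) →L[ℝ] EuclideanSpace ℝ (Fin m))ˣ := ⟨T, S, hvi, hiv⟩
  have hunit : IsUnit T := ⟨u, rfl⟩
  have hinv : Ring.inverse T = S := Ring.inverse_unit u
  refine ⟨hunit, ?_, ?_⟩
  · rw [hinv]
    refine ContinuousLinearMap.opNorm_le_bound _ (by positivity) fun y => ?_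
    calc ‖S y‖ ≤ c / ρ ^ 2 * ‖T (S y)‖ := key _
      _ = c / ρ ^ 2 * ‖y‖ := by rw [hTS]
  · intro y; rw [hinv]; exact hTS y


abbrev EE (m : ℕ) := EuclideanSpace ℝ (Fin m) →L[ℝ] EuclideanSpace ℝ (Fin m)

noncomputable def B1 (m : ℕ) : EE m →L[ℝ] (((Fin m → ℝ) →L[ℝ] EE m) →L[ℝ] ((Fin m → ℝ) →L[ℝ] EE m)) :=
  (ContinuousLinearMap.compL ℝ (Fin m → ℝ) (EE m) (EE m)).comp (ContinuousLinearMap.mul ℝ (EE m))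

noncomputable def B2 (m : ℕ) : EE m →L[ℝ] (((Fin m → ℝ) →L[ℝ] EE m) →L[ℝ] ((Fin m → ℝ) →L[ℝ] EE m)) :=
  -((ContinuousLinearMap.compL ℝ (Fin m → ℝ) (EE m) (EE m)).comp
      ((ContinuousLinearMap.mul ℝ (EE m)).flip))

@[simp] lemma B1_apply {m : ℕ} (a : EE m) (T : (Fin m → ℝ) →L[ℝ] EE m)
    (v : Fin m → ℝ) : B1 m a T v = a * T v := rfl

@[simp] lemma B2_apply {m : ℕ} (a : EE m) (T : (Fin m → ℝ) →L[ℝ] EE m)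
    (v : Fin m → ℝ) : B2 m a T v = -(T v * a) := rfl

lemma norm_B1_le (m : ℕ) : ‖B1 m‖ ≤ 1 := by
  refine (ContinuousLinearMap.opNorm_comp_le _ _).trans ?_
  calc ‖ContinuousLinearMap.compL ℝ (Fin m → ℝ) (EE m) (EE m)‖ * ‖ContinuousLinearMap.mul ℝ (EE m)‖
      ≤ 1 * 1 := mul_le_mul (ContinuousLinearMap.norm_compL_le _ _ _ _)
          (ContinuousLinearMap.opNorm_mul_le _ _) (norm_nonneg _) zero_le_one
    _ = 1 := one_mul 1

lemma norm_B2_le (m : ℕ) : ‖B2 m‖ ≤ 1 := by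
  have hmain : ‖(ContinuousLinearMap.compL ℝ (Fin m → ℝ) (EE m) (EE m)).comp
      ((ContinuousLinearMap.mul ℝ (EE m)).flip)‖ ≤ 1 := by
    refine (ContinuousLinearMap.opNorm_comp_le _ _).trans ?_
    rw [ContinuousLinearMap.opNorm_flip]
    calc ‖ContinuousLinearMap.compL ℝ (Fin m → ℝ) (EE m) (EE m)‖ * ‖ContinuousLinearMap.mul ℝ (EE m)‖
      ≤ 1 * 1 := mul_le_mul (ContinuousLinearMap.norm_compL_le _ _ _ _)
          (ContinuousLinearMap.opNorm_mul_le _ _) (norm_nonneg _) zero_le_one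
      _ = 1 := one_mul 1
  calc ‖B2 m‖ = ‖(ContinuousLinearMap.compL ℝ (Fin m → ℝ) (EE m) (EE m)).comp
        ((ContinuousLinearMap.mul ℝ (EE m)).flip)‖ :=
      norm_neg ((ContinuousLinearMap.compL ℝ (Fin m → ℝ) (EE m) (EE m)).comp
        ((ContinuousLinearMap.mul ℝ (EE m)).flip))
    _ ≤ 1 := hmain

lemma inverse_contDiffOn {m : ℕ} {U : Set (Fin m → ℝ)}
    {G : (Fin m → ℝ) → EE m} (hG : ContDiffOn ℝ (⊤ : ℕ∞) G U) (hunit : ∀ x ∈ U, IsUnit (G x)) :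
    ContDiffOn ℝ (⊤ : ℕ∞) (fun x => Ring.inverse (G x)) U := by
  intro x hx
  have h1 : ContDiffAt ℝ (⊤ : ℕ∞) Ring.inverse (G x) := by
    have := contDiffAt_ringInverse (n := (⊤ : ℕ∞)) ℝ (hunit x hx).unit
    rwa [IsUnit.unit_spec] at this
  exact h1.comp_contDiffWithinAt x (hG x hx)

lemma main_bound (m : ℕ) (c : ℝ) (hc : 1 ≤ c) (n : ℕ) :
    ∃ A : ℝ, 0 ≤ A ∧ ∀ ρ : ℝ, 0 < ρ → ∀ U : Set (Fin m → ℝ), IsOpen U →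
      ∀ G : (Fin m → ℝ) → EE m,
      ContDiffOn ℝ (⊤ : ℕ∞) G U →
      (∀ x ∈ U, ∀ ξ : EuclideanSpace ℝ (Fin m), ρ ^ 2 / c * ‖ξ‖ ^ 2 ≤ ⟪G x ξ, ξ⟫) →
      (∀ j ≤ n, ∀ x ∈ U, ‖iteratedFDerivWithin ℝ j G U x‖ ≤ c * ρ ^ 2) →
      ∀ x ∈ U, ∀ j ≤ n,
        ‖iteratedFDerivWithin ℝ j (fun y => Ring.inverse (G y)) U x‖ ≤ A / ρ ^ 2 := by
  have hc0 : (0:ℝ) < c := lt_of_lt_of_le one_pos hc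
  induction n with
  | zero =>
    refine ⟨c, hc0.le, fun ρ hρ U hU G hG hco hGb x hx j hj => ?_⟩
    interval_cases j
    rw [norm_iteratedFDerivWithin_zero]
    exact (coercive_isUnit hρ hc0 (G x) (hco x hx)).2.1
  | succ n IH =>
    obtain ⟨A, hA0, hA⟩ := IH
    refine ⟨A + 2 ^ n * 2 ^ n * A * A * c, by positivity, fun ρ hρ U hU G hG hco hGb x hx j hj => ?_⟩
    have hρ2 : (0:ℝ) < ρ ^ 2 := by positivity
    -- basic facts
    have hunit : ∀ y ∈ U, IsUnit (G y) := fun y hy =>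
      (coercive_isUnit hρ hc0 (G y) (hco y hy)).1
    set H : (Fin m → ℝ) → EE m := fun y => Ring.inverse (G y) with hHdef
    have hH : ContDiffOn ℝ (⊤ : ℕ∞) H U := inverse_contDiffOn hG hunit
    have hHb : ∀ y ∈ U, ∀ i ≤ n, ‖iteratedFDerivWithin ℝ i H U y‖ ≤ A / ρ ^ 2 :=
      hA ρ hρ U hU G hG hco (fun i hi => hGb i (hi.trans (Nat.le_succ n)))
    by_cases hjn : j ≤ n
    · calc ‖iteratedFDerivWithin ℝ j H U x‖ ≤ A / ρ ^ 2 := hHb x hx j hjn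
        _ ≤ (A + 2 ^ n * 2 ^ n * A * A * c) / ρ ^ 2 := by
            gcongr
            nlinarith [sq_nonneg ((2:ℝ) ^ n * A)]
    · have hj1 : j = n + 1 := by omega
      subst hj1
      set dG : (Fin m → ℝ) → ((Fin m → ℝ) →L[ℝ] EE m) := fderivWithin ℝ G U with hdGdef
      have hdG : ContDiffOn ℝ (⊤ : ℕ∞) dG U := hG.fderivWithin hU.uniqueDiffOn (by simp)
      set P : (Fin m → ℝ) → ((Fin m → ℝ) →L[ℝ] EE m) := fun y => B1 m (H y) (dG y) with hPdef
      have hP : ContDiffOn ℝ (⊤ : ℕ∞) P U :=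
        ((B1 m).contDiff.comp_contDiffOn hH).clm_apply hdG
      -- the key identity
      have hkey : Set.EqOn (fderivWithin ℝ H U) (fun y => B2 m (H y) (P y)) U := by
        intro y hy
        have hu := hunit y hy
        have hGdiff : HasFDerivWithinAt G (dG y) U y :=
          ((hG y hy).differentiableWithinAt (by simp)).hasFDerivWithinAt
        have hinv' : HasFDerivAt Ring.inverse
            (-(ContinuousLinearMap.mulLeftRight ℝ (EE m) ↑hu.unit⁻¹ ↑hu.unit⁻¹)) (G y) := by
          have := hasFDerivAt_ringInverse (𝕜 := ℝ) hu.unit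
          rwa [IsUnit.unit_spec] at this
        have hcomp : HasFDerivWithinAt H
            ((-(ContinuousLinearMap.mulLeftRight ℝ (EE m) ↑hu.unit⁻¹ ↑hu.unit⁻¹)).comp (dG y))
            U y := hinv'.comp_hasFDerivWithinAt y hGdiff
        have hHy : H y = ↑hu.unit⁻¹ := by
          rw [hHdef]
          simp only
          conv_lhs => rw [← IsUnit.unit_spec hu]
          exact Ring.inverse_unit hu.unit
        rw [hcomp.fderivWithin (hU.uniqueDiffOn y hy)]
        ext v
        rw [B2_apply, B1_apply]
        simp only [ContinuousLinearMap.comp_apply, ContinuousLinearMap.neg_apply,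
          ContinuousLinearMap.mulLeftRight_apply, hHy]
      -- bounds on P
      have hPb : ∀ i ≤ n, ‖iteratedFDerivWithin ℝ i P U x‖ ≤ 2 ^ n * (A * c) := by
        intro i hi
        have hbil := (B1 m).norm_iteratedFDerivWithin_le_of_bilinear hH hdG hU.uniqueDiffOn hx
          (n := i) (by exact_mod_cast le_top)
        refine hbil.trans ?_
        have hsum : ∑ l ∈ Finset.range (i + 1), (i.choose l : ℝ) *
            ‖iteratedFDerivWithin ℝ l H U x‖ * ‖iteratedFDerivWithin ℝ (i - l) dG U x‖
            ≤ 2 ^ n * (A * c) := by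
          have hterm : ∀ l ∈ Finset.range (i + 1), (i.choose l : ℝ) *
              ‖iteratedFDerivWithin ℝ l H U x‖ * ‖iteratedFDerivWithin ℝ (i - l) dG U x‖
              ≤ (i.choose l : ℝ) * (A * c) := by
            intro l hl
            have hl' : l ≤ n := by
              have := Finset.mem_range_succ_iff.mp hl; omega
            have h1 : ‖iteratedFDerivWithin ℝ l H U x‖ ≤ A / ρ ^ 2 := hHb x hx l hl'
            have h2 : ‖iteratedFDerivWithin ℝ (i - l) dG U x‖ ≤ c * ρ ^ 2 := by
              rw [hdGdef, norm_iteratedFDerivWithin_fderivWithin hU.uniqueDiffOn hx]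
              exact hGb (i - l + 1) (by omega) x hx
            calc (i.choose l : ℝ) * ‖iteratedFDerivWithin ℝ l H U x‖ *
                  ‖iteratedFDerivWithin ℝ (i - l) dG U x‖
                ≤ (i.choose l : ℝ) * (A / ρ ^ 2) * (c * ρ ^ 2) := by
                  apply mul_le_mul _ h2 (norm_nonneg _) (by positivity)
                  exact mul_le_mul_of_nonneg_left h1 (by positivity)
              _ = (i.choose l : ℝ) * (A * c) := by field_simp
          calc ∑ l ∈ Finset.range (i + 1), (i.choose l : ℝ) *
                ‖iteratedFDerivWithin ℝ l H U x‖ * ‖iteratedFDerivWithin ℝ (i - l) dG U x‖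
              ≤ ∑ l ∈ Finset.range (i + 1), (i.choose l : ℝ) * (A * c) :=
                Finset.sum_le_sum hterm
            _ = (2 : ℝ) ^ i * (A * c) := by
                rw [← Finset.sum_mul]
                congr 1
                rw [← Nat.cast_sum, Nat.sum_range_choose]
                push_cast; ring
            _ ≤ 2 ^ n * (A * c) := by
                apply mul_le_mul_of_nonneg_right _ (by positivity)
                exact pow_le_pow_right₀ one_le_two hi
        calc ‖B1 m‖ * ∑ l ∈ Finset.range (i + 1), (i.choose l : ℝ) *
              ‖iteratedFDerivWithin ℝ l H U x‖ * ‖iteratedFDerivWithin ℝ (i - l) dG U x‖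
            ≤ 1 * (2 ^ n * (A * c)) := by
              apply mul_le_mul (norm_B1_le m) hsum _ zero_le_one
              exact Finset.sum_nonneg fun l _ => by positivity
          _ = 2 ^ n * (A * c) := one_mul _
      -- final computation
      rw [← norm_iteratedFDerivWithin_fderivWithin hU.uniqueDiffOn hx,
        iteratedFDerivWithin_congr hkey hx n]
      have hbil := (B2 m).norm_iteratedFDerivWithin_le_of_bilinear hH hP hU.uniqueDiffOn hx
        (n := n) (by exact_mod_cast le_top)
      refine hbil.trans ?_
      have hsum : ∑ i ∈ Finset.range (n + 1), (n.choose i : ℝ) *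
          ‖iteratedFDerivWithin ℝ i H U x‖ * ‖iteratedFDerivWithin ℝ (n - i) P U x‖
          ≤ 2 ^ n * ((A / ρ ^ 2) * (2 ^ n * (A * c))) := by
        have hterm : ∀ i ∈ Finset.range (n + 1), (n.choose i : ℝ) *
            ‖iteratedFDerivWithin ℝ i H U x‖ * ‖iteratedFDerivWithin ℝ (n - i) P U x‖
            ≤ (n.choose i : ℝ) * ((A / ρ ^ 2) * (2 ^ n * (A * c))) := by
          intro i hi
          have hi' : i ≤ n := Finset.mem_range_succ_iff.mp hi
          have h1 : ‖iteratedFDerivWithin ℝ i H U x‖ ≤ A / ρ ^ 2 := hHb x hx i hi'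
          have h2 : ‖iteratedFDerivWithin ℝ (n - i) P U x‖ ≤ 2 ^ n * (A * c) :=
            hPb (n - i) (by omega)
          calc (n.choose i : ℝ) * ‖iteratedFDerivWithin ℝ i H U x‖ *
                ‖iteratedFDerivWithin ℝ (n - i) P U x‖
              ≤ (n.choose i : ℝ) * (A / ρ ^ 2) * (2 ^ n * (A * c)) := by
                apply mul_le_mul _ h2 (norm_nonneg _) (by positivity)
                exact mul_le_mul_of_nonneg_left h1 (by positivity)
            _ = (n.choose i : ℝ) * ((A / ρ ^ 2) * (2 ^ n * (A * c))) := by ring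
        calc ∑ i ∈ Finset.range (n + 1), (n.choose i : ℝ) *
              ‖iteratedFDerivWithin ℝ i H U x‖ * ‖iteratedFDerivWithin ℝ (n - i) P U x‖
            ≤ ∑ i ∈ Finset.range (n + 1), (n.choose i : ℝ) *
              ((A / ρ ^ 2) * (2 ^ n * (A * c))) := Finset.sum_le_sum hterm
          _ = (2:ℝ) ^ n * ((A / ρ ^ 2) * (2 ^ n * (A * c))) := by
              rw [← Finset.sum_mul]
              congr 1
              rw [← Nat.cast_sum, Nat.sum_range_choose]
              push_cast; ring
      calc ‖B2 m‖ * ∑ i ∈ Finset.range (n + 1), (n.choose i : ℝ) *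
            ‖iteratedFDerivWithin ℝ i H U x‖ * ‖iteratedFDerivWithin ℝ (n - i) P U x‖
          ≤ 1 * (2 ^ n * ((A / ρ ^ 2) * (2 ^ n * (A * c)))) := by
            apply mul_le_mul (norm_B2_le m) hsum _ zero_le_one
            exact Finset.sum_nonneg fun i _ => by positivity
        _ = (2 ^ n * 2 ^ n * A * A * c) / ρ ^ 2 := by field_simp
        _ ≤ (A + 2 ^ n * 2 ^ n * A * A * c) / ρ ^ 2 := by
            gcongr
            nlinarith [sq_nonneg ((2:ℝ) ^ n * A)]

/-- Let `G` be a smooth symmetric-operator-valued map on an open set `U ⊆ ℝ^m` which is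
uniformly elliptic, `⟨G(x)ξ,ξ⟩ ≥ (ρ²/c)|ξ|²`, and whose partial derivatives of order `≤ k`
are bounded (in operator norm) by `cρ²`.  Then every `G(x)` is invertible, `x ↦ G(x)⁻¹`
is smooth on `U`, and all partial derivatives of order `≤ k` of the inverse are bounded
by `C·ρ⁻²` with a constant `C = C(m,k,c)` independent of `ρ`, `U` and `G`. -/
theorem stmt_5 (m k : ℕ) (hm : 1 ≤ m) (c : ℝ) (hc : 1 ≤ c) :
    ∃ C : ℝ, ∀ (ρ : ℝ), 0 < ρ → ∀ U : Set (Fin m → ℝ), IsOpen U →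
      ∀ G : (Fin m → ℝ) → EuclideanSpace ℝ (Fin m) →L[ℝ] EuclideanSpace ℝ (Fin m),
      ContDiffOn ℝ (⊤ : ℕ∞) G U →
      (∀ x ∈ U, ∀ ξ η : EuclideanSpace ℝ (Fin m), ⟪G x ξ, η⟫ = ⟪ξ, G x η⟫) →
      (∀ x ∈ U, ∀ ξ : EuclideanSpace ℝ (Fin m), ρ ^ 2 / c * ‖ξ‖ ^ 2 ≤ ⟪G x ξ, ξ⟫) →
      (∀ L : List (Fin m), L.length ≤ k → ∀ x ∈ U, ‖pderivListOn U L G x‖ ≤ c * ρ ^ 2) →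
      (∀ x ∈ U, IsUnit (G x)) ∧
      ContDiffOn ℝ (⊤ : ℕ∞) (fun x => Ring.inverse (G x)) U ∧
      ∀ L : List (Fin m), L.length ≤ k → ∀ x ∈ U,
        ‖pderivListOn U L (fun y => Ring.inverse (G y)) x‖ ≤ C * ρ⁻¹ ^ 2 := by
  have hc0 : (0:ℝ) < c := lt_of_lt_of_le one_pos hc
  have hm1 : (1:ℝ) ≤ (m:ℝ) := by exact_mod_cast hm
  set c' : ℝ := (m:ℝ) ^ k * c with hc'def
  have hcc' : c ≤ c' := by
    calc c = 1 * c := (one_mul c).symm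
      _ ≤ (m:ℝ) ^ k * c := by
          apply mul_le_mul_of_nonneg_right _ hc0.le
          exact one_le_pow₀ hm1
  have hc' : 1 ≤ c' := hc.trans hcc'
  obtain ⟨A, hA0, hA⟩ := main_bound m c' hc' k
  refine ⟨A, fun ρ hρ U hU G hG hsym hco hpb => ?_⟩
  have hρ2 : (0:ℝ) < ρ ^ 2 := by positivity
  have hunit : ∀ x ∈ U, IsUnit (G x) := fun x hx =>
    (coercive_isUnit hρ hc0 (G x) (hco x hx)).1
  have hH : ContDiffOn ℝ (⊤ : ℕ∞) (fun y => Ring.inverse (G y)) U := inverse_contDiffOn hG hunit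
  have hco' : ∀ x ∈ U, ∀ ξ : EuclideanSpace ℝ (Fin m),
      ρ ^ 2 / c' * ‖ξ‖ ^ 2 ≤ ⟪G x ξ, ξ⟫ := by
    intro x hx ξ
    refine le_trans ?_ (hco x hx ξ)
    apply mul_le_mul_of_nonneg_right _ (by positivity)
    exact div_le_div_of_nonneg_left hρ2.le hc0 hcc'
  have hGb' : ∀ j ≤ k, ∀ x ∈ U, ‖iteratedFDerivWithin ℝ j G U x‖ ≤ c' * ρ ^ 2 := by
    intro j hj x hx
    have hb : ∀ r : Fin j → Fin m, ‖pderivListOn U (List.ofFn r) G x‖ ≤ c * ρ ^ 2 := by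
      intro r
      exact hpb (List.ofFn r) (by rw [List.length_ofFn]; exact hj) x hx
    calc ‖iteratedFDerivWithin ℝ j G U x‖ ≤ (m:ℝ) ^ j * (c * ρ ^ 2) :=
          iter_le_pderiv hU hG j hx (by positivity) hb
      _ ≤ (m:ℝ) ^ k * (c * ρ ^ 2) := by
          apply mul_le_mul_of_nonneg_right _ (by positivity)
          exact pow_le_pow_right₀ hm1 hj
      _ = c' * ρ ^ 2 := by rw [hc'def]; ring
  refine ⟨hunit, hH, fun L hL x hx => ?_⟩
  calc ‖pderivListOn U L (fun y => Ring.inverse (G y)) x‖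
      ≤ ‖iteratedFDerivWithin ℝ L.length (fun y => Ring.inverse (G y)) U x‖ :=
        pderiv_le_iter hU hH L hx
    _ ≤ A / ρ ^ 2 := hA ρ hρ U hU G hG hco' hGb' x hx L.length hL
    _ = A * ρ⁻¹ ^ 2 := by rw [inv_pow, div_eq_mul_inv]
end

section
/- Let U ⊆ ℝ^m be open, k ∈ ℕ, c ≥ 1 and ρ > 0, and let G : U → ℝ^{m×m} be a smooth map whose values are symmetric matrices satisfying (ρ²/c)|ξ|² ≤ ⟨G(x)ξ, ξ⟩ ≤ cρ²|ξ|² for all x ∈ U and ξ ∈ ℝ^m, and whose partial derivatives satisfy ‖∂^α G(x)‖ ≤ cρ² for all x ∈ U and |α| ≤ k. Then det G(x) > 0 for all x, the function x ↦ √(det G(x)) is smooth on U, it satisfies √(det G(x)) ∼ ρ^m uniformly (i.e. (ρ²/c)^{m/2} ≤ √(det G(x)) ≤ (cρ²)^{m/2}), and there is a constant C = C(m, k, c), independent of ρ, U and G, such that |∂^α √(det G)(x)| ≤ C·ρ^m for all x ∈ U and |α| ≤ k. -/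
open scoped RealInnerProductSpace

lemma pderivListOn_eq {m : ℕ} {F : Type*} [NormedAddCommGroup F] [NormedSpace ℝ F]
    {U : Set (Fin m → ℝ)} (hU : IsOpen U) {f : (Fin m → ℝ) → F}
    (hf : ContDiffOn ℝ (⊤ : ℕ∞) f U) :
    ∀ (L : List (Fin m)) (x : Fin m → ℝ), x ∈ U →
      pderivListOn U L f x
        = iteratedFDerivWithin ℝ L.length f U x (fun j => Pi.single (L.get j) 1)
  | [], x, hx => by simp [pderivListOn]
  | i :: L, x, hx => by
    have hUd : UniqueDiffOn ℝ U := hU.uniqueDiffOn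
    set n := L.length with hn
    set v : Fin n → (Fin m → ℝ) := fun j => Pi.single (L.get j) 1 with hv
    have hdiff : DifferentiableOn ℝ (iteratedFDerivWithin ℝ n f U) U :=
      hf.differentiableOn_iteratedFDerivWithin (by exact_mod_cast lt_top_iff_ne_top.2 (by simp)) hUd
    have h1 : fderivWithin ℝ (pderivListOn U L f) U x
        = fderivWithin ℝ (fun y => iteratedFDerivWithin ℝ n f U y v) U x := by
      apply fderivWithin_congr
      · intro y hy; exact pderivListOn_eq hU hf L y hy
      · exact pderivListOn_eq hU hf L x hx
    have h2 : HasFDerivWithinAt (fun y => iteratedFDerivWithin ℝ n f U y v)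
        ((ContinuousMultilinearMap.apply ℝ (fun _ : Fin n => (Fin m → ℝ)) F v).comp
          (fderivWithin ℝ (iteratedFDerivWithin ℝ n f U) U x)) U x := by
      exact (ContinuousMultilinearMap.apply ℝ (fun _ : Fin n => (Fin m → ℝ)) F v).hasFDerivAt.comp_hasFDerivWithinAt x
        (hdiff x hx).hasFDerivWithinAt
    have h3 := h2.fderivWithin (hUd x hx)
    show fderivWithin ℝ (pderivListOn U L f) U x (Pi.single i 1) = _
    rw [h1, h3]
    have h4 := iteratedFDerivWithin_succ_apply_left (𝕜 := ℝ) (f := f) (s := U) (x := x)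
      (n := n) (Fin.cons (Pi.single i 1) v)
    simp only [ContinuousLinearMap.coe_comp', Function.comp_apply,
      ContinuousMultilinearMap.apply_apply]
    simp only [List.length_cons]
    have hvv : (fun j : Fin (n + 1) => Pi.single ((i :: L).get j) 1)
        = (Fin.cons (Pi.single i 1) v : Fin (n+1) → Fin m → ℝ) := by
      funext j; refine Fin.cases ?_ (fun j' => ?_) j <;> simp [hv]
    rw [hvv, h4]
    simp

lemma pderivListOn_eq_ofFn {m : ℕ} {F : Type*} [NormedAddCommGroup F] [NormedSpace ℝ F]
    {U : Set (Fin m → ℝ)} (hU : IsOpen U) {f : (Fin m → ℝ) → F}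
    (hf : ContDiffOn ℝ (⊤ : ℕ∞) f U) {n : ℕ} (r : Fin n → Fin m) (x : Fin m → ℝ) (hx : x ∈ U) :
    pderivListOn U (List.ofFn r) f x
      = iteratedFDerivWithin ℝ n f U x (fun j => Pi.single (r j) 1) := by
  have key : ∀ (L : List (Fin m)) (n : ℕ) (hn : L.length = n), ∀ (r : Fin n → Fin m),
      (∀ j : Fin n, L.get (Fin.cast hn.symm j) = r j) →
      pderivListOn U L f x = iteratedFDerivWithin ℝ n f U x (fun j => Pi.single (r j) 1) := by
    intro L n hn
    subst hn
    intro r hr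
    rw [pderivListOn_eq hU hf L x hx]
    congr 1
    funext j
    rw [← hr j]
    exact congrArg (fun t => (Pi.single (L.get t) 1 : Fin m → ℝ)) (Fin.ext rfl)
  refine key (List.ofFn r) n (List.length_ofFn (f := r)) r fun j => ?_
  rw [List.get_ofFn]
  exact congrArg r (Fin.ext rfl)

lemma abs_pderivListOn_le {m : ℕ}
    {U : Set (Fin m → ℝ)} (hU : IsOpen U) {f : (Fin m → ℝ) → ℝ}
    (hf : ContDiffOn ℝ (⊤ : ℕ∞) f U) (L : List (Fin m)) (x : Fin m → ℝ) (hx : x ∈ U) :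
    |pderivListOn U L f x| ≤ ‖iteratedFDerivWithin ℝ L.length f U x‖ := by
  rw [pderivListOn_eq hU hf L x hx]
  calc |iteratedFDerivWithin ℝ L.length f U x (fun j => Pi.single (L.get j) 1)|
      ≤ ‖iteratedFDerivWithin ℝ L.length f U x‖
        * ∏ j : Fin L.length, ‖(Pi.single (L.get j) 1 : Fin m → ℝ)‖ :=
      (iteratedFDerivWithin ℝ L.length f U x).le_opNorm _
    _ = ‖iteratedFDerivWithin ℝ L.length f U x‖ := by
        simp [Pi.norm_single]

lemma pderivListOn_smul {m : ℕ} {F : Type*} [NormedAddCommGroup F] [NormedSpace ℝ F]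
    {U : Set (Fin m → ℝ)} (hU : IsOpen U) {f : (Fin m → ℝ) → F}
    (hf : ContDiffOn ℝ (⊤ : ℕ∞) f U) (a : ℝ) (L : List (Fin m)) (x : Fin m → ℝ) (hx : x ∈ U) :
    pderivListOn U L (a • f) x = a • pderivListOn U L f x := by
  have h1 : pderivListOn U L (a • f) x
      = (iteratedFDerivWithin ℝ L.length (a • f) U x) (fun j => Pi.single (L.get j) 1) :=
    pderivListOn_eq hU (hf.const_smul a) L x hx
  rw [h1, iteratedFDerivWithin_const_smul_apply ((hf x hx).of_le (by exact_mod_cast le_top)) hU.uniqueDiffOn hx,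
    pderivListOn_eq hU hf L x hx]
  rfl

lemma multilinear_norm_le {m n : ℕ} {F : Type*} [NormedAddCommGroup F] [NormedSpace ℝ F]
    (T : ContinuousMultilinearMap ℝ (fun _ : Fin n => (Fin m → ℝ)) F) {b : ℝ} (hb : 0 ≤ b)
    (h : ∀ r : Fin n → Fin m, ‖T (fun j => Pi.single (r j) 1)‖ ≤ b) :
    ‖T‖ ≤ (m : ℝ) ^ n * b := by
  apply T.opNorm_le_bound (by positivity)
  intro v
  have hv : ∀ j, v j = ∑ i : Fin m, v j i • (Pi.single i 1 : Fin m → ℝ) := by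
    intro j; funext t
    simp [Finset.sum_apply, Pi.single_apply, Finset.sum_ite_eq', mul_comm]
  have expand : T v = ∑ r ∈ Fintype.piFinset (fun _ : Fin n => (Finset.univ : Finset (Fin m))),
      (∏ j, v j (r j)) • T (fun j => Pi.single (r j) 1) := by
    calc T v = T (fun j => ∑ i : Fin m, v j i • (Pi.single i 1 : Fin m → ℝ)) := by
          congr 1; funext j; exact hv j
      _ = _ := by
          have e1 := T.map_sum_finset
            (fun (j : Fin n) (i : Fin m) => v j i • (Pi.single i 1 : Fin m → ℝ))
            (fun _ => (Finset.univ : Finset (Fin m)))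
          rw [e1]
          refine Finset.sum_congr rfl fun r _ => ?_
          exact T.map_smul_univ (fun j => v j (r j)) _
  rw [expand]
  calc ‖∑ r ∈ Fintype.piFinset (fun _ : Fin n => (Finset.univ : Finset (Fin m))),
        (∏ j, v j (r j)) • T (fun j => Pi.single (r j) 1)‖
      ≤ ∑ r ∈ Fintype.piFinset (fun _ : Fin n => (Finset.univ : Finset (Fin m))),
        ‖(∏ j, v j (r j)) • T (fun j => Pi.single (r j) 1)‖ := norm_sum_le _ _
    _ ≤ ∑ _r ∈ Fintype.piFinset (fun _ : Fin n => (Finset.univ : Finset (Fin m))),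
        (b * ∏ j, ‖v j‖) := by
        refine Finset.sum_le_sum fun r _ => ?_
        rw [norm_smul]
        have h1 : ‖∏ j, v j (r j)‖ ≤ ∏ j, ‖v j‖ := by
          rw [Real.norm_eq_abs, Finset.abs_prod]
          exact Finset.prod_le_prod (fun j _ => abs_nonneg _)
            (fun j _ => norm_le_pi_norm (v j) (r j))
        calc ‖∏ j, v j (r j)‖ * ‖T fun j => Pi.single (r j) 1‖
            ≤ (∏ j, ‖v j‖) * b := by
              apply mul_le_mul h1 (h r) (norm_nonneg _)
              exact Finset.prod_nonneg fun j _ => norm_nonneg _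
          _ = b * ∏ j, ‖v j‖ := mul_comm _ _
    _ = (m : ℝ) ^ n * b * ∏ j, ‖v j‖ := by
        rw [Finset.sum_const, Fintype.card_piFinset]
        simp [mul_assoc]
    _ ≤ (m : ℝ) ^ n * b * ∏ i, ‖v i‖ := le_refl _

lemma opNorm_le_of_quadratic {m : ℕ}
    (A : EuclideanSpace ℝ (Fin m) →L[ℝ] EuclideanSpace ℝ (Fin m)) {b : ℝ} (hb : 0 ≤ b)
    (hsym : ∀ ξ η, ⟪A ξ, η⟫ = ⟪ξ, A η⟫)
    (h0 : ∀ ξ, 0 ≤ ⟪A ξ, ξ⟫)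
    (hub : ∀ ξ, ⟪A ξ, ξ⟫ ≤ b * ‖ξ‖ ^ 2) : ‖A‖ ≤ b := by
  have hCS : ∀ ξ η, ⟪A ξ, η⟫ ^ 2 ≤ ⟪A ξ, ξ⟫ * ⟪A η, η⟫ := by
    intro ξ η
    have hsy : ⟪A η, ξ⟫ = ⟪A ξ, η⟫ := by rw [hsym η ξ]; exact (real_inner_comm _ _).symm
    have hq : ∀ t : ℝ, 0 ≤ ⟪A η, η⟫ * (t * t) + 2 * ⟪A ξ, η⟫ * t + ⟪A ξ, ξ⟫ := by
      intro t
      have h := h0 (ξ + t • η)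
      have hexp : ⟪A (ξ + t • η), ξ + t • η⟫
          = ⟪A η, η⟫ * (t * t) + 2 * ⟪A ξ, η⟫ * t + ⟪A ξ, ξ⟫ := by
        simp only [map_add, map_smul, inner_add_left, inner_add_right,
          real_inner_smul_left, real_inner_smul_right, hsy]
        ring
      linarith [hexp ▸ h]
    have hd := discrim_le_zero (a := ⟪A η, η⟫) (b := 2 * ⟪A ξ, η⟫) (c := ⟪A ξ, ξ⟫) hq
    rw [discrim] at hd
    nlinarith [hd]
  have key : ∀ ξ, ‖A ξ‖ ≤ b * ‖ξ‖ := by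
    intro ξ
    have h1 := hCS ξ (A ξ)
    rw [real_inner_self_eq_norm_sq] at h1
    have h2 : ⟪A ξ, ξ⟫ ≤ b * ‖ξ‖ ^ 2 := hub ξ
    have h3 : ⟪A (A ξ), A ξ⟫ ≤ b * ‖A ξ‖ ^ 2 := hub (A ξ)
    have h4 : (0:ℝ) ≤ ⟪A ξ, ξ⟫ := h0 ξ
    have h5 : (0:ℝ) ≤ ⟪A (A ξ), A ξ⟫ := h0 (A ξ)
    rcases eq_or_lt_of_le (norm_nonneg (A ξ)) with hz | hz
    · rw [← hz]; positivity
    · have h6 : (‖A ξ‖ ^ 2) ^ 2 ≤ (b * ‖ξ‖ ^ 2) * (b * ‖A ξ‖ ^ 2) := by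
        calc (‖A ξ‖ ^ 2) ^ 2 ≤ ⟪A ξ, ξ⟫ * ⟪A (A ξ), A ξ⟫ := h1
          _ ≤ (b * ‖ξ‖ ^ 2) * (b * ‖A ξ‖ ^ 2) := by
              apply mul_le_mul h2 h3 h5 (by positivity)
      have h7 : ‖A ξ‖ ^ 2 ≤ (b * ‖ξ‖) ^ 2 := by
        have h6' : ‖A ξ‖ ^ 2 * ‖A ξ‖ ^ 2 ≤ (b * ‖ξ‖) ^ 2 * ‖A ξ‖ ^ 2 := by nlinarith [h6]
        exact le_of_mul_le_mul_right h6' (by positivity)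
      nlinarith [h7, hz, mul_nonneg hb (norm_nonneg ξ)]
  exact A.opNorm_le_bound hb key

lemma det_bounds {m : ℕ}
    (A : EuclideanSpace ℝ (Fin m) →L[ℝ] EuclideanSpace ℝ (Fin m)) {a b : ℝ} (ha : 0 < a)
    (hsym : ∀ ξ η, ⟪A ξ, η⟫ = ⟪ξ, A η⟫)
    (hlb : ∀ ξ, a * ‖ξ‖ ^ 2 ≤ ⟪A ξ, ξ⟫)
    (hub : ∀ ξ, ⟪A ξ, ξ⟫ ≤ b * ‖ξ‖ ^ 2) :
    a ^ m ≤ LinearMap.det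
        (A : EuclideanSpace ℝ (Fin m) →ₗ[ℝ] EuclideanSpace ℝ (Fin m))
      ∧ LinearMap.det
        (A : EuclideanSpace ℝ (Fin m) →ₗ[ℝ] EuclideanSpace ℝ (Fin m)) ≤ b ^ m := by
  set T : EuclideanSpace ℝ (Fin m) →ₗ[ℝ] EuclideanSpace ℝ (Fin m) := ↑A with hT
  have hTsym : T.IsSymmetric := fun ξ η => hsym ξ η
  have hn : Module.finrank ℝ (EuclideanSpace ℝ (Fin m)) = m := finrank_euclideanSpace_fin
  set B := hTsym.eigenvectorBasis hn with hB
  set μ := hTsym.eigenvalues hn with hμdef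
  have happ : ∀ i, T (B i) = μ i • B i := fun i =>
    (hTsym.hasEigenvector_eigenvectorBasis hn i).apply_eq_smul
  have hnorm : ∀ i, ‖B i‖ = 1 := fun i => B.orthonormal.1 i
  have hμ : ∀ i, a ≤ μ i ∧ μ i ≤ b := by
    intro i
    have h1 : ⟪A (B i), B i⟫ = μ i := by
      have : A (B i) = μ i • B i := happ i
      rw [this, real_inner_smul_left, real_inner_self_eq_norm_sq, hnorm i]
      ring
    constructor
    · have := hlb (B i); rw [h1, hnorm i] at this; simpa using this
    · have := hub (B i); rw [h1, hnorm i] at this; simpa using this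
  have hdet : LinearMap.det T = ∏ i, μ i := by
    rw [← LinearMap.det_toMatrix B.toBasis T]
    have hmat : LinearMap.toMatrix B.toBasis B.toBasis T = Matrix.diagonal μ := by
      ext i j
      rw [LinearMap.toMatrix_apply, OrthonormalBasis.coe_toBasis, happ j, map_smul]
      rw [show B.toBasis.repr (B j) = Finsupp.single j 1 by
        rw [← OrthonormalBasis.coe_toBasis, Module.Basis.repr_self]]
      by_cases h : i = j <;> simp [Matrix.diagonal, Finsupp.single_apply, h, eq_comm]
    rw [hmat, Matrix.det_diagonal]
  constructor
  · rw [show LinearMap.det T = ∏ i, μ i from hdet]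
    calc a ^ m = ∏ _i : Fin m, a := by simp
      _ ≤ ∏ i, μ i := Finset.prod_le_prod (fun _ _ => le_of_lt ha) (fun i _ => (hμ i).1)
  · rw [show LinearMap.det T = ∏ i, μ i from hdet]
    calc ∏ i, μ i ≤ ∏ _i : Fin m, b :=
          Finset.prod_le_prod (fun i _ => le_trans (le_of_lt ha) (hμ i).1)
            (fun i _ => (hμ i).2)
      _ = b ^ m := by simp

lemma contDiff_detCLM (m : ℕ) :
    ContDiff ℝ (⊤ : ℕ∞) (fun A : EuclideanSpace ℝ (Fin m) →L[ℝ] EuclideanSpace ℝ (Fin m) =>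
      LinearMap.det (A : EuclideanSpace ℝ (Fin m) →ₗ[ℝ] EuclideanSpace ℝ (Fin m))) := by
  have key : ∀ A : EuclideanSpace ℝ (Fin m) →L[ℝ] EuclideanSpace ℝ (Fin m),
      LinearMap.det (A : EuclideanSpace ℝ (Fin m) →ₗ[ℝ] EuclideanSpace ℝ (Fin m))
        = ∑ σ : Equiv.Perm (Fin m), ((Equiv.Perm.sign σ : ℤ) : ℝ) *
            ∏ i, (A ((PiLp.basisFun 2 ℝ (Fin m)) i)) (σ i) := by
    intro A
    rw [← LinearMap.det_toMatrix (PiLp.basisFun 2 ℝ (Fin m)), Matrix.det_apply]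
    refine Finset.sum_congr rfl fun σ _ => ?_
    rw [Units.smul_def, zsmul_eq_mul]
    push_cast
    congr 1
    refine Finset.prod_congr rfl fun i _ => ?_
    rw [LinearMap.toMatrix_apply, PiLp.basisFun_repr]
    rfl
  rw [show (fun A : EuclideanSpace ℝ (Fin m) →L[ℝ] EuclideanSpace ℝ (Fin m) =>
      LinearMap.det (A : EuclideanSpace ℝ (Fin m) →ₗ[ℝ] EuclideanSpace ℝ (Fin m)))
    = fun A => ∑ σ : Equiv.Perm (Fin m), ((Equiv.Perm.sign σ : ℤ) : ℝ) *
        ∏ i, (A ((PiLp.basisFun 2 ℝ (Fin m)) i)) (σ i) from funext key]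
  apply ContDiff.sum
  intro σ _
  apply ContDiff.mul contDiff_const
  apply contDiff_prod
  intro i _
  exact (((EuclideanSpace.proj (σ i) : EuclideanSpace ℝ (Fin m) →L[ℝ] ℝ)).comp
    (ContinuousLinearMap.apply ℝ (EuclideanSpace ℝ (Fin m))
      ((PiLp.basisFun 2 ℝ (Fin m)) i))).contDiff


/-- Let `G` be a smooth symmetric-operator-valued map on an open set `U ⊆ ℝ^m` with
`(ρ²/c)|ξ|² ≤ ⟨G(x)ξ,ξ⟩ ≤ cρ²|ξ|²` and with all partial derivatives of order `≤ k`
bounded in operator norm by `cρ²`.  Then `det G(x) > 0`, the function `√(det G)` is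
smooth on `U`, it satisfies `(ρ²/c)^{m/2} ≤ √(det G(x)) ≤ (cρ²)^{m/2}`, and all its
partial derivatives of order `≤ k` are bounded by `C·ρ^m` with a constant `C = C(m,k,c)`
independent of `ρ`, `U` and `G`. -/
theorem stmt_7 (m k : ℕ) (hm : 1 ≤ m) (c : ℝ) (hc : 1 ≤ c) :
    ∃ C : ℝ, ∀ (ρ : ℝ), 0 < ρ → ∀ U : Set (Fin m → ℝ), IsOpen U →
      ∀ G : (Fin m → ℝ) → EuclideanSpace ℝ (Fin m) →L[ℝ] EuclideanSpace ℝ (Fin m),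
      ContDiffOn ℝ (⊤ : ℕ∞) G U →
      (∀ x ∈ U, ∀ ξ η : EuclideanSpace ℝ (Fin m), ⟪G x ξ, η⟫ = ⟪ξ, G x η⟫) →
      (∀ x ∈ U, ∀ ξ : EuclideanSpace ℝ (Fin m),
        ρ ^ 2 / c * ‖ξ‖ ^ 2 ≤ ⟪G x ξ, ξ⟫ ∧ ⟪G x ξ, ξ⟫ ≤ c * ρ ^ 2 * ‖ξ‖ ^ 2) →
      (∀ L : List (Fin m), L.length ≤ k → ∀ x ∈ U, ‖pderivListOn U L G x‖ ≤ c * ρ ^ 2) →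
      (∀ x ∈ U, 0 < LinearMap.det
        (G x : EuclideanSpace ℝ (Fin m) →ₗ[ℝ] EuclideanSpace ℝ (Fin m))) ∧
      ContDiffOn ℝ (⊤ : ℕ∞) (fun y => Real.sqrt (LinearMap.det
        (G y : EuclideanSpace ℝ (Fin m) →ₗ[ℝ] EuclideanSpace ℝ (Fin m)))) U ∧
      (∀ x ∈ U,
        (ρ ^ 2 / c) ^ ((m : ℝ) / 2) ≤ Real.sqrt (LinearMap.det
          (G x : EuclideanSpace ℝ (Fin m) →ₗ[ℝ] EuclideanSpace ℝ (Fin m))) ∧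
        Real.sqrt (LinearMap.det
          (G x : EuclideanSpace ℝ (Fin m) →ₗ[ℝ] EuclideanSpace ℝ (Fin m)))
          ≤ (c * ρ ^ 2) ^ ((m : ℝ) / 2)) ∧
      ∀ L : List (Fin m), L.length ≤ k → ∀ x ∈ U,
        |pderivListOn U L (fun y => Real.sqrt (LinearMap.det
          (G y : EuclideanSpace ℝ (Fin m) →ₗ[ℝ] EuclideanSpace ℝ (Fin m)))) x|
          ≤ C * ρ ^ m := by
  classical
  have hc0 : (0:ℝ) < c := lt_of_lt_of_le one_pos hc
  set detC : (EuclideanSpace ℝ (Fin m) →L[ℝ] EuclideanSpace ℝ (Fin m)) → ℝ :=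
    fun A => LinearMap.det
      (A : EuclideanSpace ℝ (Fin m) →ₗ[ℝ] EuclideanSpace ℝ (Fin m)) with hdetCdef
  have hdetC : ContDiff ℝ (⊤ : ℕ∞) detC := contDiff_detCLM m
  have H1 : ∀ i : ℕ, ∃ Ci : ℝ, 0 ≤ Ci ∧
      ∀ A ∈ Metric.closedBall
        (0 : EuclideanSpace ℝ (Fin m) →L[ℝ] EuclideanSpace ℝ (Fin m)) c,
        ‖iteratedFDeriv ℝ i detC A‖ ≤ Ci := by
    intro i
    obtain ⟨Ci, hCi⟩ := (isCompact_closedBall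
        (0 : EuclideanSpace ℝ (Fin m) →L[ℝ] EuclideanSpace ℝ (Fin m)) c).exists_bound_of_continuousOn
      ((hdetC.continuous_iteratedFDeriv (by exact_mod_cast le_top)).continuousOn)
    exact ⟨max Ci 0, le_max_right _ _, fun A hA => (hCi A hA).trans (le_max_left _ _)⟩
  choose Cd hCd0 hCd using H1
  have hsqrtC : ContDiffOn ℝ (⊤ : ℕ∞) Real.sqrt (Set.Ioi (0:ℝ)) :=
    fun t ht => (Real.contDiffAt_sqrt (ne_of_gt ht)).contDiffWithinAt
  have hIccsub : Set.Icc (c⁻¹ ^ m) (c ^ m) ⊆ Set.Ioi (0:ℝ) := fun t ht =>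
    lt_of_lt_of_le (by positivity) ht.1
  have H2 : ∀ i : ℕ, ∃ Ci : ℝ, 0 ≤ Ci ∧ ∀ t ∈ Set.Icc (c⁻¹ ^ m) (c ^ m),
      ‖iteratedFDerivWithin ℝ i Real.sqrt (Set.Ioi (0:ℝ)) t‖ ≤ Ci := by
    intro i
    obtain ⟨Ci, hCi⟩ := (isCompact_Icc (a := c⁻¹ ^ m) (b := c ^ m)).exists_bound_of_continuousOn
      (((hsqrtC.continuousOn_iteratedFDerivWithin (by exact_mod_cast le_top) isOpen_Ioi.uniqueDiffOn)).mono hIccsub)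
    exact ⟨max Ci 0, le_max_right _ _, fun t ht => (hCi t ht).trans (le_max_left _ _)⟩
  choose Cs hCs0 hCs using H2
  have hne : (Finset.range (k+1)).Nonempty := Finset.nonempty_range_iff.2 (Nat.succ_ne_zero k)
  set C1 : ℝ := (Finset.range (k+1)).sup' hne Cd with hC1def
  have hC1 : ∀ i, i ≤ k → Cd i ≤ C1 := fun i hi =>
    Finset.le_sup' Cd (Finset.mem_range.2 (Nat.lt_succ_of_le hi))
  have hC10 : 0 ≤ C1 := le_trans (hCd0 0) (hC1 0 (Nat.zero_le k))
  set C2 : ℝ := (Finset.range (k+1)).sup' hne Cs with hC2def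
  have hC2 : ∀ i, i ≤ k → Cs i ≤ C2 := fun i hi =>
    Finset.le_sup' Cs (Finset.mem_range.2 (Nat.lt_succ_of_le hi))
  have hC20 : 0 ≤ C2 := le_trans (hCs0 0) (hC2 0 (Nat.zero_le k))
  set D : ℝ := (m : ℝ) * c with hDdef
  have hD1 : 1 ≤ D := by
    have hm1 : (1:ℝ) ≤ (m:ℝ) := by exact_mod_cast hm
    nlinarith
  set K1 : ℝ := (k.factorial : ℝ) * C1 * D ^ k with hK1def
  have hK10 : 0 ≤ K1 := by positivity
  set D2 : ℝ := max 1 K1 with hD2def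
  have hD21 : 1 ≤ D2 := le_max_left _ _
  refine ⟨(k.factorial : ℝ) * C2 * D2 ^ k, ?_⟩
  intro ρ hρ U hU G hG hGsym hGbd hGpd
  have hρ2 : (0:ℝ) < ρ ^ 2 := by positivity
  have hUd : UniqueDiffOn ℝ U := hU.uniqueDiffOn
  have hdetGbd : ∀ x ∈ U, (ρ^2/c)^m ≤ detC (G x) ∧ detC (G x) ≤ (c*ρ^2)^m := by
    intro x hx
    exact det_bounds (G x) (by positivity) (hGsym x hx)
      (fun ξ => (hGbd x hx ξ).1) (fun ξ => (hGbd x hx ξ).2)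
  have hdetGpos : ∀ x ∈ U, 0 < detC (G x) := fun x hx =>
    lt_of_lt_of_le (by positivity) (hdetGbd x hx).1
  have hdetG : ContDiffOn ℝ (⊤ : ℕ∞) (fun y => detC (G y)) U := hdetC.comp_contDiffOn hG
  have hsqrtG : ContDiffOn ℝ (⊤ : ℕ∞) (fun y => Real.sqrt (detC (G y))) U :=
    hdetG.sqrt fun x hx => ne_of_gt (hdetGpos x hx)
  refine ⟨fun x hx => hdetGpos x hx, hsqrtG, ?_, ?_⟩
  · intro x hx
    have hrw : ∀ y : ℝ, 0 < y → y ^ ((m:ℝ)/2) = Real.sqrt (y ^ m) := by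
      intro y hy
      rw [show ((m:ℝ)/2) = (m:ℝ) * (1/2) by ring, Real.rpow_mul hy.le,
        Real.rpow_natCast, Real.sqrt_eq_rpow]
    constructor
    · rw [hrw _ (by positivity : (0:ℝ) < ρ^2/c)]
      exact Real.sqrt_le_sqrt (hdetGbd x hx).1
    · rw [hrw _ (by positivity : (0:ℝ) < c*ρ^2)]
      exact Real.sqrt_le_sqrt (hdetGbd x hx).2
  · intro L hLk x hx
    have hρinv : (0:ℝ) < (ρ^2)⁻¹ := by positivity
    set G' : (Fin m → ℝ) → EuclideanSpace ℝ (Fin m) →L[ℝ] EuclideanSpace ℝ (Fin m) :=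
      (ρ ^ 2)⁻¹ • G with hG'def
    have hG'app : ∀ y, G' y = (ρ ^ 2)⁻¹ • G y := fun y => rfl
    have hG' : ContDiffOn ℝ (⊤ : ℕ∞) G' U := by
      rw [hG'def]
      show ContDiffOn ℝ (⊤ : ℕ∞) (fun y => (ρ ^ 2)⁻¹ • G y) U
      exact hG.const_smul _
    have hG'sym : ∀ z ∈ U, ∀ ξ η : EuclideanSpace ℝ (Fin m),
        ⟪G' z ξ, η⟫ = ⟪ξ, G' z η⟫ := by
      intro z hz ξ η
      rw [hG'app]
      simp only [ContinuousLinearMap.smul_apply, real_inner_smul_left, real_inner_smul_right]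
      rw [hGsym z hz ξ η]
    have hG'lb : ∀ z ∈ U, ∀ ξ : EuclideanSpace ℝ (Fin m),
        c⁻¹ * ‖ξ‖^2 ≤ ⟪G' z ξ, ξ⟫ := by
      intro z hz ξ
      rw [hG'app]
      simp only [ContinuousLinearMap.smul_apply, real_inner_smul_left]
      rw [show c⁻¹ * ‖ξ‖^2 = (ρ^2)⁻¹ * (ρ^2/c * ‖ξ‖^2) by
        field_simp]
      exact mul_le_mul_of_nonneg_left (hGbd z hz ξ).1 hρinv.le
    have hG'ub : ∀ z ∈ U, ∀ ξ : EuclideanSpace ℝ (Fin m),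
        ⟪G' z ξ, ξ⟫ ≤ c * ‖ξ‖^2 := by
      intro z hz ξ
      rw [hG'app]
      simp only [ContinuousLinearMap.smul_apply, real_inner_smul_left]
      rw [show c * ‖ξ‖^2 = (ρ^2)⁻¹ * (c * ρ^2 * ‖ξ‖^2) by
        field_simp]
      exact mul_le_mul_of_nonneg_left (hGbd z hz ξ).2 hρinv.le
    have hG'norm : ∀ z ∈ U, G' z ∈ Metric.closedBall
        (0 : EuclideanSpace ℝ (Fin m) →L[ℝ] EuclideanSpace ℝ (Fin m)) c := by
      intro z hz
      rw [Metric.mem_closedBall, dist_zero_right]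
      exact opNorm_le_of_quadratic (G' z) hc0.le (hG'sym z hz)
        (fun ξ => le_trans (by positivity) (hG'lb z hz ξ)) (hG'ub z hz)
    have hdet'bd : ∀ z ∈ U, detC (G' z) ∈ Set.Icc (c⁻¹ ^ m) (c ^ m) := by
      intro z hz
      have h := det_bounds (G' z) (inv_pos.2 hc0) (hG'sym z hz) (hG'lb z hz) (hG'ub z hz)
      exact ⟨h.1, h.2⟩
    have hdet'pos : ∀ z ∈ U, 0 < detC (G' z) := fun z hz =>
      lt_of_lt_of_le (by positivity) (hdet'bd z hz).1
    have hdet' : ContDiffOn ℝ (⊤ : ℕ∞) (fun y => detC (G' y)) U := hdetC.comp_contDiffOn hG'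
    have hG'pd : ∀ L' : List (Fin m), L'.length ≤ k → ∀ z ∈ U,
        ‖pderivListOn U L' G' z‖ ≤ c := by
      intro L' hL' z hz
      rw [hG'def, pderivListOn_smul hU hG ((ρ^2)⁻¹) L' z hz]
      rw [norm_smul, Real.norm_eq_abs, abs_of_pos hρinv]
      calc (ρ^2)⁻¹ * ‖pderivListOn U L' G z‖ ≤ (ρ^2)⁻¹ * (c * ρ^2) :=
            mul_le_mul_of_nonneg_left (hGpd L' hL' z hz) hρinv.le
        _ = c := by field_simp
    have hIterG' : ∀ i : ℕ, 1 ≤ i → i ≤ k → ∀ z ∈ U,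
        ‖iteratedFDerivWithin ℝ i G' U z‖ ≤ D ^ i := by
      intro i h1i hik z hz
      have hbd : ∀ r : Fin i → Fin m,
          ‖iteratedFDerivWithin ℝ i G' U z (fun j => Pi.single (r j) 1)‖ ≤ c := by
        intro r
        rw [← pderivListOn_eq_ofFn hU hG' r z hz]
        exact hG'pd (List.ofFn r) (by simpa using hik) z hz
      calc ‖iteratedFDerivWithin ℝ i G' U z‖ ≤ (m:ℝ) ^ i * c :=
            multilinear_norm_le _ hc0.le hbd
        _ ≤ (m:ℝ) ^ i * c ^ i := by
            exact mul_le_mul_of_nonneg_left (le_self_pow₀ hc (by omega)) (by positivity)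
        _ = D ^ i := by rw [hDdef, mul_pow]
    have hstep1 : ∀ n : ℕ, n ≤ k → ∀ z ∈ U,
        ‖iteratedFDerivWithin ℝ n (fun y => detC (G' y)) U z‖ ≤ K1 := by
      intro n hn z hz
      have hcomp : ‖iteratedFDerivWithin ℝ n (detC ∘ G') U z‖
          ≤ (n.factorial : ℝ) * C1 * D ^ n := by
        apply norm_iteratedFDerivWithin_comp_le (t := Set.univ) (N := ((⊤ : ℕ∞) : WithTop ℕ∞))
          (C := C1) (D := D) hdetC.contDiffOn hG' (by exact_mod_cast le_top) uniqueDiffOn_univ hUd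
          (Set.mapsTo_univ _ _) hz
        · intro i hi
          rw [iteratedFDerivWithin_univ]
          exact le_trans (hCd i (G' z) (hG'norm z hz)) (hC1 i (le_trans hi hn))
        · intro i h1i hin
          exact hIterG' i h1i (le_trans hin hn) z hz
      calc ‖iteratedFDerivWithin ℝ n (fun y => detC (G' y)) U z‖
          = ‖iteratedFDerivWithin ℝ n (detC ∘ G') U z‖ := rfl
        _ ≤ (n.factorial : ℝ) * C1 * D ^ n := hcomp
        _ ≤ (k.factorial : ℝ) * C1 * D ^ k := by
            apply mul_le_mul
            · apply mul_le_mul _ le_rfl hC10 (by positivity)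
              exact_mod_cast Nat.factorial_le hn
            · exact pow_le_pow_right₀ hD1 hn
            · positivity
            · positivity
        _ = K1 := hK1def.symm
    have hsqrt' : ContDiffOn ℝ (⊤ : ℕ∞) (fun y => Real.sqrt (detC (G' y))) U :=
      hdet'.sqrt fun z hz => (hdet'pos z hz).ne'
    have hstep2 : ∀ n : ℕ, n ≤ k → ∀ z ∈ U,
        ‖iteratedFDerivWithin ℝ n (fun y => Real.sqrt (detC (G' y))) U z‖
          ≤ (k.factorial : ℝ) * C2 * D2 ^ k := by
      intro n hn z hz
      have hcomp : ‖iteratedFDerivWithin ℝ n (Real.sqrt ∘ (fun y => detC (G' y))) U z‖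
          ≤ (n.factorial : ℝ) * C2 * D2 ^ n := by
        apply norm_iteratedFDerivWithin_comp_le (t := Set.Ioi (0:ℝ)) (N := ((⊤ : ℕ∞) : WithTop ℕ∞))
          (C := C2) (D := D2) hsqrtC hdet' (by exact_mod_cast le_top) isOpen_Ioi.uniqueDiffOn hUd
          (fun y hy => hdet'pos y hy) hz
        · intro i hi
          exact le_trans (hCs i _ (hdet'bd z hz)) (hC2 i (le_trans hi hn))
        · intro i h1i hin
          calc ‖iteratedFDerivWithin ℝ i (fun y => detC (G' y)) U z‖ ≤ K1 :=
                hstep1 i (le_trans hin hn) z hz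
            _ ≤ D2 := le_max_right _ _
            _ ≤ D2 ^ i := le_self_pow₀ hD21 (by omega)
      calc ‖iteratedFDerivWithin ℝ n (fun y => Real.sqrt (detC (G' y))) U z‖
          = ‖iteratedFDerivWithin ℝ n (Real.sqrt ∘ (fun y => detC (G' y))) U z‖ := rfl
        _ ≤ (n.factorial : ℝ) * C2 * D2 ^ n := hcomp
        _ ≤ (k.factorial : ℝ) * C2 * D2 ^ k := by
            apply mul_le_mul
            · apply mul_le_mul _ le_rfl hC20 (by positivity)
              exact_mod_cast Nat.factorial_le hn
            · exact pow_le_pow_right₀ hD21 hn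
            · positivity
            · positivity
    have hfun : (fun y => Real.sqrt (LinearMap.det
          ((G y) : EuclideanSpace ℝ (Fin m) →ₗ[ℝ] EuclideanSpace ℝ (Fin m))))
        = (ρ ^ m) • (fun y => Real.sqrt (detC (G' y))) := by
      funext y
      have h1 : G y = (ρ^2) • G' y := by
        rw [hG'app, smul_smul, mul_inv_cancel₀ hρ2.ne', one_smul]
      have h2 : detC (G y) = (ρ^2)^m * detC (G' y) := by
        rw [h1]
        show LinearMap.det (((ρ^2 • G' y : EuclideanSpace ℝ (Fin m) →L[ℝ]
            EuclideanSpace ℝ (Fin m))) : EuclideanSpace ℝ (Fin m) →ₗ[ℝ]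
            EuclideanSpace ℝ (Fin m)) = _
        rw [ContinuousLinearMap.coe_smul, LinearMap.det_smul, finrank_euclideanSpace_fin]
      show Real.sqrt (detC (G y)) = ρ^m * Real.sqrt (detC (G' y))
      rw [h2, show (ρ^2)^m = (ρ^m)^2 by ring, Real.sqrt_mul (sq_nonneg _),
        Real.sqrt_sq (by positivity)]
    rw [hfun, pderivListOn_smul hU hsqrt' (ρ^m) L x hx]
    rw [smul_eq_mul, abs_mul, abs_of_pos (by positivity : (0:ℝ) < ρ^m)]
    rw [mul_comm ((Nat.factorial k : ℝ) * C2 * D2 ^ k) (ρ^m)]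
    apply mul_le_mul_of_nonneg_left _ (by positivity : (0:ℝ) ≤ ρ^m)
    calc |pderivListOn U L (fun y => Real.sqrt (detC (G' y))) x|
        ≤ ‖iteratedFDerivWithin ℝ L.length (fun y => Real.sqrt (detC (G' y))) U x‖ :=
          abs_pderivListOn_le hU hsqrt' L x hx
      _ ≤ (k.factorial : ℝ) * C2 * D2 ^ k := hstep2 L.length hLk x hx
end

section
/- Let U ⊆ ℝ^m be open, k ∈ ℕ, c ≥ 1 and ρ > 0, and let f : U → ℝ be a smooth function with ρ²/c ≤ f(x) ≤ cρ² and |∂^α f(x)| ≤ cρ² for all x ∈ U and all multi-indices α with |α| ≤ k. Then the functions √f and 1/√f are smooth on U, and there is a constant C = C(m, k, c), independent of ρ, U and f, such that |∂^α(√f)(x)| ≤ C·ρ and |∂^α(1/√f)(x)| ≤ C·ρ^{−1} for all x ∈ U and |α| ≤ k. -/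
open Set


lemma pderiv_eq {m : ℕ} {U : Set (Fin m → ℝ)} (hU : IsOpen U) {f : (Fin m → ℝ) → ℝ}
    (hf : ContDiffOn ℝ (⊤ : ℕ∞) f U) :
    ∀ (n : ℕ) (p : Fin n → Fin m), ∀ x ∈ U,
      pderivListOn U (List.ofFn p) f x
        = iteratedFDerivWithin ℝ n f U x (fun j => Pi.single (p j) 1) := by
  intro n
  induction n with
  | zero =>
    intro p x hx
    simp [List.ofFn_zero, pderivListOn, iteratedFDerivWithin_zero_apply]
  | succ n IH =>
    intro p x hx
    have hd : DifferentiableWithinAt ℝ (iteratedFDerivWithin ℝ n f U) U x := by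
      have h1 : ContDiffOn ℝ ((n + 1 : ℕ) : WithTop ℕ∞) f U := hf.of_le (by exact_mod_cast le_top)
      exact (h1.differentiableOn_iteratedFDerivWithin (by exact_mod_cast n.lt_succ_self)
        hU.uniqueDiffOn) x hx
    have hcongr : fderivWithin ℝ (pderivListOn U (List.ofFn (p ∘ Fin.succ)) f) U x
        = fderivWithin ℝ
          (fun y => iteratedFDerivWithin ℝ n f U y (fun j => Pi.single (p j.succ) 1)) U x :=
      fderivWithin_congr (fun y hy => IH (p ∘ Fin.succ) y hy) (IH (p ∘ Fin.succ) x hx)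
    rw [List.ofFn_succ]
    show fderivWithin ℝ (pderivListOn U (List.ofFn (p ∘ Fin.succ)) f) U x (Pi.single (p 0) 1) = _
    rw [hcongr, fderivWithin_continuousMultilinear_apply_const_apply
      (hU.uniqueDiffOn x hx) hd _ _, iteratedFDerivWithin_succ_apply_left]
    rfl

lemma cmm_norm_le {m n : ℕ} (A : ContinuousMultilinearMap ℝ (fun _ : Fin n => (Fin m → ℝ)) ℝ)
    {B : ℝ} (hB : 0 ≤ B)
    (h : ∀ p : Fin n → Fin m, |A (fun j => Pi.single (p j) 1)| ≤ B) :
    ‖A‖ ≤ (m : ℝ) ^ n * B := by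
  refine A.opNorm_le_bound (by positivity) fun v => ?_
  have hv : ∀ j, v j = ∑ i : Fin m, v j i • (Pi.single i 1 : Fin m → ℝ) := by
    intro j
    have : ∀ i : Fin m, v j i • (Pi.single i 1 : Fin m → ℝ) = Pi.single i (v j i) := by
      intro i
      rw [← Pi.single_smul, smul_eq_mul, mul_one]
    simp_rw [this, Finset.univ_sum_single]
  calc ‖A v‖ = ‖A (fun j => ∑ i : Fin m, v j i • (Pi.single i 1 : Fin m → ℝ))‖ := by
        congr 1; exact congrArg A (funext hv)
    _ = ‖∑ p : Fin n → Fin m, (∏ j, v j (p j)) • A (fun j => Pi.single (p j) 1)‖ := by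
        rw [A.map_sum]
        congr 1
        refine Finset.sum_congr rfl fun p _ => ?_
        exact A.map_smul_univ (fun j => v j (p j)) (fun j => Pi.single (p j) 1)
    _ ≤ ∑ p : Fin n → Fin m, ‖(∏ j, v j (p j)) • A (fun j => Pi.single (p j) 1)‖ :=
        norm_sum_le _ _
    _ ≤ ∑ p : Fin n → Fin m, (∏ j, ‖v j‖) * B := by
        refine Finset.sum_le_sum fun p _ => ?_
        rw [norm_smul]
        refine mul_le_mul ?_ (h p) (abs_nonneg _) (Finset.prod_nonneg fun j _ => norm_nonneg _)
        rw [Real.norm_eq_abs, Finset.abs_prod]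
        exact Finset.prod_le_prod (fun j _ => abs_nonneg _) fun j _ => norm_le_pi_norm (v j) (p j)
    _ = (m : ℝ) ^ n * B * ∏ j, ‖v j‖ := by
        rw [Finset.sum_const, Finset.card_univ]
        simp [Fintype.card_fun]
        ring

lemma aux_bound (k : ℕ) {c : ℝ} (hc : 1 ≤ c) (g : ℝ → ℝ)
    (hg : ContDiffOn ℝ (⊤ : ℕ∞) g (Set.Ioi 0)) :
    ∃ C : ℝ, 0 ≤ C ∧ ∀ i ≤ k, ∀ y ∈ Set.Icc c⁻¹ c,
      ‖iteratedFDerivWithin ℝ i g (Set.Ioi 0) y‖ ≤ C := by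
  have hc0 : (0 : ℝ) < c := lt_of_lt_of_le one_pos hc
  have hsub : Set.Icc c⁻¹ c ⊆ Set.Ioi (0 : ℝ) := fun y hy => lt_of_lt_of_le (by positivity) hy.1
  have H : ∀ i : ℕ, ∃ Ci : ℝ, ∀ y ∈ Set.Icc c⁻¹ c,
      ‖iteratedFDerivWithin ℝ i g (Set.Ioi 0) y‖ ≤ Ci := by
    intro i
    have hcont : ContinuousOn (iteratedFDerivWithin ℝ i g (Set.Ioi 0)) (Set.Icc c⁻¹ c) :=
      (hg.continuousOn_iteratedFDerivWithin (by exact_mod_cast le_top) (uniqueDiffOn_Ioi 0)).mono hsub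
    exact isCompact_Icc.exists_bound_of_continuousOn hcont
  choose Ci hCi using H
  refine ⟨max 0 ((Finset.range (k + 1)).sup' Finset.nonempty_range_add_one Ci),
    le_max_left _ _, fun i hik y hy => ?_⟩
  exact le_trans (hCi i y hy) (le_trans
    (Finset.le_sup' Ci (Finset.mem_range.2 (Nat.lt_succ_of_le hik))) (le_max_right _ _))

/-- If `f` is a smooth function on an open set `U ⊆ ℝ^m` with `ρ²/c ≤ f ≤ cρ²` and all
partial derivatives of order `≤ k` bounded by `cρ²`, then `√f` and `1/√f` are smooth on
`U` and their partial derivatives of order `≤ k` are bounded by `C·ρ` and `C·ρ⁻¹`,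
respectively, with a constant `C = C(m,k,c)` independent of `ρ`, `U` and `f`. -/
theorem stmt_8 (m k : ℕ) (c : ℝ) (hc : 1 ≤ c) :
    ∃ C : ℝ, ∀ (ρ : ℝ), 0 < ρ → ∀ U : Set (Fin m → ℝ), IsOpen U →
      ∀ f : (Fin m → ℝ) → ℝ, ContDiffOn ℝ (⊤ : ℕ∞) f U →
      (∀ x ∈ U, ρ ^ 2 / c ≤ f x ∧ f x ≤ c * ρ ^ 2) →
      (∀ L : List (Fin m), L.length ≤ k → ∀ x ∈ U, |pderivListOn U L f x| ≤ c * ρ ^ 2) →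
      ContDiffOn ℝ (⊤ : ℕ∞) (fun x => Real.sqrt (f x)) U ∧
      ContDiffOn ℝ (⊤ : ℕ∞) (fun x => 1 / Real.sqrt (f x)) U ∧
      ∀ L : List (Fin m), L.length ≤ k → ∀ x ∈ U,
        |pderivListOn U L (fun y => Real.sqrt (f y)) x| ≤ C * ρ ∧
        |pderivListOn U L (fun y => 1 / Real.sqrt (f y)) x| ≤ C * ρ⁻¹ := by
  have hc0 : (0 : ℝ) < c := lt_of_lt_of_le one_pos hc
  -- smoothness of sqrt and 1/sqrt on (0, ∞)
  have hg₁ : ContDiffOn ℝ (⊤ : ℕ∞) Real.sqrt (Set.Ioi 0) := fun y hy =>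
    (Real.contDiffAt_sqrt (ne_of_gt hy)).contDiffWithinAt
  have hg₂ : ContDiffOn ℝ (⊤ : ℕ∞) (fun y => 1 / Real.sqrt y) (Set.Ioi 0) := by
    simp only [one_div]
    exact hg₁.inv fun y hy => (Real.sqrt_pos.2 hy).ne'
  obtain ⟨C₁, hC₁0, hC₁⟩ := aux_bound k hc Real.sqrt hg₁
  obtain ⟨C₂, hC₂0, hC₂⟩ := aux_bound k hc (fun y => 1 / Real.sqrt y) hg₂
  set B : ℝ := ((m : ℝ) + 1) ^ k * c with hBdef
  have hB0 : 0 ≤ B := by positivity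
  set D : ℝ := max B 1 with hDdef
  have hD1 : (1 : ℝ) ≤ D := le_max_right _ _
  refine ⟨(k.factorial : ℝ) * max C₁ C₂ * D ^ k, ?_⟩
  intro ρ hρ U hU f hf hbnd hder
  have hUd : UniqueDiffOn ℝ U := hU.uniqueDiffOn
  have hfpos : ∀ x ∈ U, 0 < f x := fun x hx =>
    lt_of_lt_of_le (by positivity) (hbnd x hx).1
  have hs1 : ContDiffOn ℝ (⊤ : ℕ∞) (fun x => Real.sqrt (f x)) U :=
    hf.sqrt fun x hx => (hfpos x hx).ne'
  have hs2 : ContDiffOn ℝ (⊤ : ℕ∞) (fun x => 1 / Real.sqrt (f x)) U := by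
    simp only [one_div]
    exact hs1.inv fun x hx => (Real.sqrt_pos.2 (hfpos x hx)).ne'
  refine ⟨hs1, hs2, ?_⟩
  -- the rescaled function h = f / ρ²
  set a : ℝ := (ρ ^ 2)⁻¹ with hadef
  have ha0 : 0 < a := by positivity
  set h : (Fin m → ℝ) → ℝ := a • f with hhdef
  have hh : ContDiffOn ℝ (⊤ : ℕ∞) h U := hf.const_smul a
  have hhx : ∀ x, h x = a * f x := fun x => rfl
  have hhb : ∀ x ∈ U, h x ∈ Set.Icc c⁻¹ c := by
    intro x hx
    obtain ⟨h1, h2⟩ := hbnd x hx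
    constructor
    · calc c⁻¹ = a * (ρ ^ 2 / c) := by rw [hadef]; field_simp
        _ ≤ a * f x := mul_le_mul_of_nonneg_left h1 ha0.le
    · calc a * f x ≤ a * (c * ρ ^ 2) := mul_le_mul_of_nonneg_left h2 ha0.le
        _ = c := by rw [hadef]; field_simp
  have hmaps : Set.MapsTo h U (Set.Ioi (0 : ℝ)) := fun x hx =>
    lt_of_lt_of_le (by positivity) (hhb x hx).1
  -- bound on the iterated derivatives of h
  have hhd : ∀ n, n ≤ k → ∀ x ∈ U, ‖iteratedFDerivWithin ℝ n h U x‖ ≤ B := by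
    intro n hn x hx
    have h1 : ‖iteratedFDerivWithin ℝ n f U x‖ ≤ (m : ℝ) ^ n * (c * ρ ^ 2) := by
      refine cmm_norm_le _ (by positivity) fun p => ?_
      rw [← pderiv_eq hU hf n p x hx]
      exact hder (List.ofFn p) (by rw [List.length_ofFn]; exact hn) x hx
    have h2 : iteratedFDerivWithin ℝ n h U x = a • iteratedFDerivWithin ℝ n f U x :=
      iteratedFDerivWithin_const_smul_apply ((hf.of_le (by exact_mod_cast le_top)) x hx) hUd hx
    rw [h2, norm_smul a (iteratedFDerivWithin ℝ n f U x), Real.norm_eq_abs, abs_of_pos ha0]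
    calc a * ‖iteratedFDerivWithin ℝ n f U x‖ ≤ a * ((m : ℝ) ^ n * (c * ρ ^ 2)) :=
          mul_le_mul_of_nonneg_left h1 ha0.le
      _ = (m : ℝ) ^ n * c := by rw [hadef]; field_simp
      _ ≤ ((m : ℝ) + 1) ^ k * c := by
          refine mul_le_mul_of_nonneg_right ?_ hc0.le
          calc (m : ℝ) ^ n ≤ ((m : ℝ) + 1) ^ n :=
                pow_le_pow_left₀ (by positivity) (by linarith) n
            _ ≤ ((m : ℝ) + 1) ^ k := pow_le_pow_right₀ (by have : (0:ℝ) ≤ (m:ℝ) := Nat.cast_nonneg m; linarith) hn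
      _ = B := rfl
  -- composition bound
  have hcomp : ∀ (g : ℝ → ℝ), ContDiffOn ℝ (⊤ : ℕ∞) g (Set.Ioi 0) → ∀ Cg : ℝ, 0 ≤ Cg →
      (∀ i ≤ k, ∀ y ∈ Set.Icc c⁻¹ c, ‖iteratedFDerivWithin ℝ i g (Set.Ioi 0) y‖ ≤ Cg) →
      ∀ n, n ≤ k → ∀ x ∈ U, ‖iteratedFDerivWithin ℝ n (g ∘ h) U x‖ ≤
        (k.factorial : ℝ) * Cg * D ^ k := by
    intro g hg Cg hCg0 hCg n hn x hx
    have key : ‖iteratedFDerivWithin ℝ n (g ∘ h) U x‖ ≤ (n.factorial : ℝ) * Cg * D ^ n := by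
      refine norm_iteratedFDerivWithin_comp_le hg hh (by exact_mod_cast le_top) (uniqueDiffOn_Ioi 0) hUd hmaps hx
        (fun i hi => hCg i (le_trans hi hn) (h x) (hhb x hx)) (fun i hi1 hi2 => ?_)
      calc ‖iteratedFDerivWithin ℝ i h U x‖ ≤ B := hhd i (le_trans hi2 hn) x hx
        _ ≤ D := le_max_left _ _
        _ ≤ D ^ i := le_self_pow₀ hD1 (by omega)
    refine le_trans key ?_
    have h1 : (n.factorial : ℝ) ≤ (k.factorial : ℝ) := Nat.cast_le.2 (Nat.factorial_le hn)
    have h2 : D ^ n ≤ D ^ k := pow_le_pow_right₀ hD1 hn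
    calc (n.factorial : ℝ) * Cg * D ^ n ≤ (k.factorial : ℝ) * Cg * D ^ n := by
          refine mul_le_mul_of_nonneg_right (mul_le_mul_of_nonneg_right h1 hCg0) (by positivity)
      _ ≤ (k.factorial : ℝ) * Cg * D ^ k := by
          refine mul_le_mul_of_nonneg_left h2 (by positivity)
  -- global identities
  have keysqrt : ∀ x, Real.sqrt (f x) = ρ * Real.sqrt (h x) := by
    intro x
    rw [hhx, hadef, Real.sqrt_mul (by positivity), Real.sqrt_inv, Real.sqrt_sq hρ.le]
    field_simp
  have keyinv : ∀ x, 1 / Real.sqrt (f x) = ρ⁻¹ * (1 / Real.sqrt (h x)) := by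
    intro x
    rw [keysqrt x, one_div, one_div, mul_inv]
  have hfun1 : (fun y => Real.sqrt (f y)) = ρ • (Real.sqrt ∘ h) := by
    funext y
    simp only [Pi.smul_apply, Function.comp_apply, smul_eq_mul]
    exact keysqrt y
  have hfun2 : (fun y => 1 / Real.sqrt (f y)) = ρ⁻¹ • ((fun z => 1 / Real.sqrt z) ∘ h) := by
    funext y
    simp only [Pi.smul_apply, Function.comp_apply, smul_eq_mul]
    exact keyinv y
  have hch1 : ContDiffOn ℝ (⊤ : ℕ∞) (Real.sqrt ∘ h) U := hg₁.comp hh hmaps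
  have hch2 : ContDiffOn ℝ (⊤ : ℕ∞) ((fun z => 1 / Real.sqrt z) ∘ h) U := hg₂.comp hh hmaps
  -- final estimates
  intro L hL x hx
  have hprod : (∏ j : Fin L.length, ‖(Pi.single (L.get j) 1 : Fin m → ℝ)‖) = 1 := by
    refine Finset.prod_eq_one fun j _ => ?_
    rw [Pi.norm_single, norm_one]
  constructor
  · have e1 := pderiv_eq hU hs1 L.length L.get x hx
    rw [List.ofFn_get] at e1
    rw [hfun1] at e1 ⊢
    rw [e1]
    have e2 : iteratedFDerivWithin ℝ L.length (ρ • (Real.sqrt ∘ h)) U x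
        = ρ • iteratedFDerivWithin ℝ L.length (Real.sqrt ∘ h) U x :=
      iteratedFDerivWithin_const_smul_apply ((hch1.of_le (by exact_mod_cast le_top)) x hx) hUd hx
    rw [e2]
    have e3 : (ρ • iteratedFDerivWithin ℝ L.length (Real.sqrt ∘ h) U x)
        (fun j => Pi.single (L.get j) 1)
        = ρ * iteratedFDerivWithin ℝ L.length (Real.sqrt ∘ h) U x
          (fun j => Pi.single (L.get j) 1) := rfl
    rw [e3, abs_mul, abs_of_pos hρ]
    rw [mul_comm ((k.factorial : ℝ) * max C₁ C₂ * D ^ k) ρ]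
    refine mul_le_mul_of_nonneg_left ?_ hρ.le
    calc |iteratedFDerivWithin ℝ L.length (Real.sqrt ∘ h) U x (fun j => Pi.single (L.get j) 1)|
        ≤ ‖iteratedFDerivWithin ℝ L.length (Real.sqrt ∘ h) U x‖ *
          ∏ j : Fin L.length, ‖(Pi.single (L.get j) 1 : Fin m → ℝ)‖ :=
          (iteratedFDerivWithin ℝ L.length (Real.sqrt ∘ h) U x).le_opNorm _
      _ = ‖iteratedFDerivWithin ℝ L.length (Real.sqrt ∘ h) U x‖ := by rw [hprod, mul_one]
      _ ≤ (k.factorial : ℝ) * C₁ * D ^ k := hcomp Real.sqrt hg₁ C₁ hC₁0 hC₁ L.length hL x hx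
      _ ≤ (k.factorial : ℝ) * max C₁ C₂ * D ^ k := by
          refine mul_le_mul_of_nonneg_right
            (mul_le_mul_of_nonneg_left (le_max_left _ _) (by positivity)) (by positivity)
  · have e1 := pderiv_eq hU hs2 L.length L.get x hx
    rw [List.ofFn_get] at e1
    rw [hfun2] at e1 ⊢
    rw [e1]
    have e2 : iteratedFDerivWithin ℝ L.length (ρ⁻¹ • ((fun z => 1 / Real.sqrt z) ∘ h)) U x
        = ρ⁻¹ • iteratedFDerivWithin ℝ L.length ((fun z => 1 / Real.sqrt z) ∘ h) U x :=
      iteratedFDerivWithin_const_smul_apply ((hch2.of_le (by exact_mod_cast le_top)) x hx) hUd hx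
    rw [e2]
    have e3 : (ρ⁻¹ • iteratedFDerivWithin ℝ L.length ((fun z => 1 / Real.sqrt z) ∘ h) U x)
        (fun j => Pi.single (L.get j) 1)
        = ρ⁻¹ * iteratedFDerivWithin ℝ L.length ((fun z => 1 / Real.sqrt z) ∘ h) U x
          (fun j => Pi.single (L.get j) 1) := rfl
    rw [e3, abs_mul, abs_of_pos (inv_pos.2 hρ)]
    rw [mul_comm ((k.factorial : ℝ) * max C₁ C₂ * D ^ k) ρ⁻¹]
    refine mul_le_mul_of_nonneg_left ?_ (inv_pos.2 hρ).le
    calc |iteratedFDerivWithin ℝ L.length ((fun z => 1 / Real.sqrt z) ∘ h) U x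
          (fun j => Pi.single (L.get j) 1)|
        ≤ ‖iteratedFDerivWithin ℝ L.length ((fun z => 1 / Real.sqrt z) ∘ h) U x‖ *
          ∏ j : Fin L.length, ‖(Pi.single (L.get j) 1 : Fin m → ℝ)‖ :=
          (iteratedFDerivWithin ℝ L.length ((fun z => 1 / Real.sqrt z) ∘ h) U x).le_opNorm _
      _ = ‖iteratedFDerivWithin ℝ L.length ((fun z => 1 / Real.sqrt z) ∘ h) U x‖ := by
          rw [hprod, mul_one]
      _ ≤ (k.factorial : ℝ) * C₂ * D ^ k :=
          hcomp (fun z => 1 / Real.sqrt z) hg₂ C₂ hC₂0 hC₂ L.length hL x hx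
      _ ≤ (k.factorial : ℝ) * max C₁ C₂ * D ^ k := by
          refine mul_le_mul_of_nonneg_right
            (mul_le_mul_of_nonneg_left (le_max_right _ _) (by positivity)) (by positivity)
end

section
/- Let X be a separable topological space, k ∈ ℕ, and (U_i)_{i∈I} a family of nonempty open subsets of X such that every point of X belongs to U_i for at most k indices i ∈ I. Then the index set I is countable. -/
/-!
Each member of the family meets a fixed countable dense set, so the index set is covered by
countably many sets `{i | x ∈ U i}`, each of which is finite.
-/

open Set TopologicalSpace

theorem countable_of_isOpen_of_countable_setOf_mem {X ι : Type*} [TopologicalSpace X]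
    [SeparableSpace X] {s : ι → Set X} (ho : ∀ i, IsOpen (s i)) (hne : ∀ i, (s i).Nonempty)
    (hpt : ∀ x, {i | x ∈ s i}.Countable) : Countable ι := by
  obtain ⟨u, hu, hdense⟩ := exists_countable_dense X
  choose f hfu hfs using fun i ↦ hdense.exists_mem_open (ho i) (hne i)
  have hcover : (univ : Set ι) ⊆ ⋃ x ∈ u, {i | x ∈ s i} :=
    fun i _ ↦ mem_biUnion (hfu i) (hfs i)
  exact countable_univ_iff.mp ((hu.biUnion fun x _ ↦ hpt x).mono hcover)

/-- If a separable topological space is covered by a family of nonempty open sets of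
finite multiplicity (each point lies in at most `k` of them), then the index set of the
family is countable. -/
theorem stmt_11 {X : Type*} [TopologicalSpace X] [TopologicalSpace.SeparableSpace X]
    {I : Type*} (k : ℕ) (U : I → Set X)
    (hopen : ∀ i, IsOpen (U i)) (hne : ∀ i, (U i).Nonempty)
    (hmult : ∀ x : X, {i : I | x ∈ U i}.Finite ∧ {i : I | x ∈ U i}.ncard ≤ k) :
    Countable I :=
  countable_of_isOpen_of_countable_setOf_mem hopen hne fun x ↦ (hmult x).1.countable
end
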